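/- Let k be a field (or replace k-vector spaces by modules over an arbitrary ring). Assume the data of a bounded-below commuting double complex with rows 0,…,n equipped with row contractions for rows 0,…,n−1, and the morphisms t i j k defined from them. Then for all i, j, k with 1 ≤ k ≤ i ≤ n and j ≥ 0: ∂ (i−k) (j+k) ∘ t i j k − κ (i−k+1) (j+k−1) ∘ t i j (k−1) = (−1)^k · t i (j−1) k ∘ ∂ i j, as maps X i j → X (i−k) (j+k−1) (for j = 0 the right-hand side is 0 since ∂ i 0 = 0). -/

import Mathlib

/-!
Applying the contraction identity `∂ s = id - s ∂` to `t (k + 1) = s κ t k` and commuting `∂`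
past `κ` gives `∂ t (k + 1) = κ t k - s κ ∂ t k`. Substituting the identity for `∂ t k`
(induction on `k`), the term `s κ κ t (k - 1)` vanishes because `κ κ = 0`, and
`-s κ ((-1)^k t k ∂) = (-1)^(k+1) t (k + 1) ∂`. In degree `0` the induction starts from
`∂ s = id` and no `t k ∂` term arises.
-/

section
variable {R : Type} [Ring R] {X : ℕ → ℕ → Type}
  [∀ i j, AddCommGroup (X i j)] [∀ i j, Module R (X i j)]

/-- Transport a linear map along equalities of grading indices (an identity map). -/
def lcast {i j : ℕ} (i' j' : ℕ) (h : i = i') (h' : j = j') : X i j →ₗ[R] X i' j' := by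
  subst h; subst h'; exact LinearMap.id

end

section
variable {R : Type} [Ring R] {X : ℕ → ℕ → Type}
  [∀ i j, AddCommGroup (X i j)] [∀ i j, Module R (X i j)]

theorem map_lcast {f g : ℕ → ℕ} (F : ∀ a b, X a b →ₗ[R] X (f a) (g b)) {a b b' : ℕ}
    (h : b = b') (w : X a b) :
    F a b' (lcast (R := R) a b' rfl h w)
      = lcast (R := R) (f a) (g b') rfl (congrArg g h) (F a b w) := by
  subst h; rfl

variable {n : ℕ} (d : ∀ i j, X i j →ₗ[R] X i (j - 1))
  (κ : ∀ i j, X i j →ₗ[R] X (i - 1) j) (s : ∀ i j, X i j →ₗ[R] X i (j + 1))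
  (t : ∀ i j kk, X i j →ₗ[R] X (i - kk) (j + kk))

theorem κ_κ_apply (hκκ : ∀ i j, (κ i j).comp (κ (i + 1) j) = 0) {b : ℕ} (hb : 1 ≤ b)
    (j : ℕ) (w : X b j) : κ (b - 1) j (κ b j w) = 0 := by
  obtain ⟨c, rfl⟩ : ∃ c, b = c + 1 := ⟨b - 1, by omega⟩
  exact LinearMap.congr_fun (hκκ c j) w

theorem d_s_κ_apply
    (hcomm : ∀ i j, (κ i j).comp (d i (j + 1)) = (d (i - 1) (j + 1)).comp (κ i (j + 1)))
    (hs : ∀ i, i < n → ∀ j,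
      (lcast i (j + 1) rfl rfl).comp ((d i (j + 2)).comp (s i (j + 1)))
        + (s i j).comp (d i (j + 1)) = LinearMap.id)
    {b m : ℕ} (hb : b - 1 < n) (w : X b (m + 1)) :
    d (b - 1) (m + 2) (s (b - 1) (m + 1) (κ b (m + 1) w))
      = κ b (m + 1) w - s (b - 1) m (κ b m (d b (m + 1) w)) := by
  have hc : κ b m (d b (m + 1) w) = d (b - 1) (m + 1) (κ b (m + 1) w) :=
    LinearMap.congr_fun (hcomm b m) w
  rw [eq_sub_iff_add_eq, hc]
  exact LinearMap.congr_fun (hs (b - 1) hb m) (κ b (m + 1) w)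

-- Degrees are written in the shape `d_s_κ_apply` produces (`0 + kk + 1`, not `0 + (kk + 1)`),
-- so that the induction hypothesis rewrites syntactically.
theorem d_t_succ_apply_zero (hs0 : ∀ i, i < n → (d i 1).comp (s i 0) = LinearMap.id)
    (hcomm : ∀ i j, (κ i j).comp (d i (j + 1)) = (d (i - 1) (j + 1)).comp (κ i (j + 1)))
    (hs : ∀ i, i < n → ∀ j,
      (lcast i (j + 1) rfl rfl).comp ((d i (j + 2)).comp (s i (j + 1)))
        + (s i j).comp (d i (j + 1)) = LinearMap.id)
    (hκκ : ∀ i j, (κ i j).comp (κ (i + 1) j) = 0)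
    (ht0 : ∀ i j, t i j 0 = LinearMap.id)
    (htsucc : ∀ i j kk, kk + 1 ≤ i →
      t i j (kk + 1) = (s (i - (kk + 1)) (j + kk)).comp ((κ (i - kk) (j + kk)).comp (t i j kk)))
    {i : ℕ} (hi : i ≤ n) (x : X i 0) :
    ∀ kk, kk + 1 ≤ i →
      d (i - (kk + 1)) (0 + kk + 1) (t i 0 (kk + 1) x) = κ (i - kk) (0 + kk) (t i 0 kk x) := by
  intro kk
  induction kk with
  | zero =>
    intro h
    rw [htsucc i 0 0 h, ht0]
    exact LinearMap.congr_fun (hs0 (i - 1) (by omega)) (κ i 0 x)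
  | succ kk ih =>
    intro h
    have hκκ' : κ (i - (kk + 1)) (0 + kk) (κ (i - kk) (0 + kk) (t i 0 kk x)) = 0 :=
      κ_κ_apply κ hκκ (b := i - kk) (by omega) _ _
    rw [htsucc i 0 (kk + 1) h, LinearMap.comp_apply, LinearMap.comp_apply]
    refine (d_s_κ_apply d κ s hcomm hs (b := i - (kk + 1)) (m := 0 + kk) (by omega) _).trans ?_
    rw [ih (by omega), hκκ', map_zero, sub_zero]
    rfl

theorem d_t_succ_apply
    (hcomm : ∀ i j, (κ i j).comp (d i (j + 1)) = (d (i - 1) (j + 1)).comp (κ i (j + 1)))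
    (hs : ∀ i, i < n → ∀ j,
      (lcast i (j + 1) rfl rfl).comp ((d i (j + 2)).comp (s i (j + 1)))
        + (s i j).comp (d i (j + 1)) = LinearMap.id)
    (hκκ : ∀ i j, (κ i j).comp (κ (i + 1) j) = 0)
    (ht0 : ∀ i j, t i j 0 = LinearMap.id)
    (htsucc : ∀ i j kk, kk + 1 ≤ i →
      t i j (kk + 1) = (s (i - (kk + 1)) (j + kk)).comp ((κ (i - kk) (j + kk)).comp (t i j kk)))
    {i j : ℕ} (hi : i ≤ n) (x : X i (j + 1)) :
    ∀ kk, kk + 1 ≤ i →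
      d (i - (kk + 1)) (j + 1 + kk + 1) (t i (j + 1) (kk + 1) x)
        = κ (i - kk) (j + 1 + kk) (t i (j + 1) kk x)
          + (-1 : ℤ) ^ (kk + 1) • lcast (R := R) (i - (kk + 1)) (j + 1 + kk) rfl
              (Nat.add_right_comm j kk 1)
              (t i j (kk + 1) (d i (j + 1) x)) := by
  intro kk
  induction kk with
  | zero =>
    intro h
    rw [htsucc i (j + 1) 0 h, htsucc i j 0 h, ht0, ht0]
    refine (d_s_κ_apply d κ s hcomm hs (b := i) (m := j) (by omega) x).trans ?_
    rw [pow_one, neg_one_zsmul, ← sub_eq_add_neg]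
    rfl
  | succ kk ih =>
    intro h
    have hκκ' :
        κ (i - (kk + 1)) (j + 1 + kk) (κ (i - kk) (j + 1 + kk) (t i (j + 1) kk x)) = 0 :=
      κ_κ_apply κ hκκ (b := i - kk) (by omega) _ _
    rw [htsucc i (j + 1) (kk + 1) h, htsucc i j (kk + 1) h, LinearMap.comp_apply,
      LinearMap.comp_apply]
    refine
      (d_s_κ_apply d κ s hcomm hs (b := i - (kk + 1)) (m := j + 1 + kk) (by omega) _).trans ?_
    rw [ih (by omega), map_add, map_add, hκκ', map_zero, zero_add, map_zsmul, map_zsmul,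
      map_lcast κ, map_lcast s, pow_succ _ (kk + 1), mul_neg_one, neg_smul, ← sub_eq_add_neg]
    rfl
end

theorem statement3 (R : Type) [Ring R] (n : ℕ)
    (X : ℕ → ℕ → Type) [∀ i j, AddCommGroup (X i j)] [∀ i j, Module R (X i j)]
    -- vertical differentials `∂ i j : X i j → X i (j−1)` and horizontal differentials
    -- `κ i j : X i j → X (i−1) j`, with `∂ i 0 = 0` and `κ 0 j = 0`
    (d : ∀ i j, X i j →ₗ[R] X i (j - 1))
    (κ : ∀ i j, X i j →ₗ[R] X (i - 1) j)
    (hκκ : ∀ i j, (κ i j).comp (κ (i + 1) j) = 0)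
    -- the commutation relation `κ i (j−1) ∘ ∂ i j = ∂ (i−1) j ∘ κ i j` (stated at source
    -- degree `j+1`; at `j = 0` it holds trivially since `∂ i 0 = 0`)
    (hcomm : ∀ i j, (κ i j).comp (d i (j + 1)) = (d (i - 1) (j + 1)).comp (κ i (j + 1)))
    -- row contractions for rows `0,…,n−1`:
    -- `∂ i (j+1) ∘ s i j + s i (j−1) ∘ ∂ i j = id` (with `s i (−1) := 0`)
    (s : ∀ i j, X i j →ₗ[R] X i (j + 1))
    (hs0 : ∀ i, i < n → (d i 1).comp (s i 0) = LinearMap.id)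
    (hs : ∀ i, i < n → ∀ j,
      (lcast (i) (j+1) rfl (by omega)).comp ((d i (j + 2)).comp (s i (j + 1)))
        + (s i j).comp (d i (j + 1)) = LinearMap.id)
    -- the morphisms `t i j k : X i j → X (i−k) (j+k)` for `k ≤ i`, defined recursively by
    -- `t i j 0 = id` and `t i j (k+1) = s (i−k−1) (j+k) ∘ κ (i−k) (j+k) ∘ t i j k`
    (t : ∀ i j kk, X i j →ₗ[R] X (i - kk) (j + kk))
    (ht0 : ∀ i j, t i j 0 = LinearMap.id)
    (htsucc : ∀ i j kk, kk + 1 ≤ i →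
      t i j (kk + 1) = (s (i - (kk + 1)) (j + kk)).comp ((κ (i - kk) (j + kk)).comp (t i j kk)))
 :
    (∀ i j kk, kk + 1 ≤ i → i ≤ n →
      -- `∂ (i−k) (j+k) ∘ t i j k − κ (i−k+1) (j+k−1) ∘ t i j (k−1) = (−1)^k • t i (j−1) k ∘ ∂ i j`
      -- (here with `k = kk+1 ≥ 1` and at `j+1`, i.e. `j ≥ 1`)
      (lcast (i - (kk + 1)) (j + 1 + kk) rfl (by omega)).comp
          ((d (i - (kk + 1)) (j + 1 + (kk + 1))).comp
            ((lcast (i - (kk + 1)) (j + 1 + (kk + 1)) (by omega) rfl).comp (t i (j + 1) (kk + 1))))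
        - (lcast (i - (kk + 1)) (j + 1 + kk) (by omega) rfl).comp
            ((κ (i - kk) (j + 1 + kk)).comp (t i (j + 1) kk))
      = ((-1 : ℤ) ^ (kk + 1)) •
          ((lcast (i - (kk + 1)) (j + 1 + kk) rfl (by omega)).comp
            ((t i j (kk + 1)).comp (d i (j + 1))))) ∧
    (∀ i kk, kk + 1 ≤ i → i ≤ n →
      -- the case `j = 0`: the right-hand side is `0` since `∂ i 0 = 0`
      (lcast (i - (kk + 1)) (0 + kk) rfl (by omega)).comp
          ((d (i - (kk + 1)) (0 + (kk + 1))).comp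
            ((lcast (i - (kk + 1)) (0 + (kk + 1)) (by omega) rfl).comp (t i 0 (kk + 1))))
        - (lcast (i - (kk + 1)) (0 + kk) (by omega) rfl).comp
            ((κ (i - kk) (0 + kk)).comp (t i 0 kk)) = 0) := by
  refine ⟨fun i j kk hk hi => ?_, fun i kk hk hi => ?_⟩
  · ext x
    simp only [LinearMap.sub_apply, LinearMap.smul_apply, LinearMap.comp_apply]
    exact sub_eq_iff_eq_add'.mpr (d_t_succ_apply d κ s t hcomm hs hκκ ht0 htsucc hi x kk hk)
  · ext x
    simp only [LinearMap.sub_apply, LinearMap.comp_apply, LinearMap.zero_apply]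
    exact sub_eq_zero.mpr (d_t_succ_apply_zero d κ s t hs0 hcomm hs hκκ ht0 htsucc hi x kk hk)
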